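/- In the energy Hilbert space H_E of a connected network (V, E, c) with base point o, the Dirac function δ_x satisfies δ_x = c(x)v_x - Σ_{y∼x} c_{xy} v_y (as elements of H_E), where c(x) = Σ_{y∼x} c_{xy}; moreover |⟨φ, v_x⟩_{H_E}| = |φ(x) - φ(o)| ≤ √2 ‖φ‖_{ℓ²} for all finitely supported φ. -/
import Mathlib


section Network

variable {V : Type*}

/-- The energy `‖u‖²_{H_E} = (1/2) Σ_{(xy)} c_{xy} |u(x) - u(y)|²` of a function on the
vertices of a network with conductance `c` (valued in `ℝ≥0∞`, so finiteness makes sense). -/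
noncomputable def energy (c : V → V → ℝ) (u : V → ℂ) : ENNReal :=
  (∑' p : V × V, ENNReal.ofReal (c p.1 p.2 * ‖u p.1 - u p.2‖ ^ 2)) / 2

/-- The energy inner product
`⟨u, v⟩_{H_E} = (1/2) Σ_{(xy)} c_{xy} (conj(u x) - conj(u y)) (v x - v y)`. -/
noncomputable def energyInner (c : V → V → ℝ) (u v : V → ℂ) : ℂ :=
  (1 / 2) * ∑' p : V × V,
    (c p.1 p.2 : ℂ) * (starRingEnd ℂ) (u p.1 - u p.2) * (v p.1 - v p.2)

/-- Conjugate symmetry of the energy inner product. -/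
lemma energyInner_conj (c : V → V → ℝ) (u w : V → ℂ) :
    energyInner c u w = (starRingEnd ℂ) (energyInner c w u) := by
  unfold energyInner
  rw [map_mul, starRingEnd_apply, starRingEnd_apply, tsum_star]
  congr 1
  · norm_num
  · refine tsum_congr fun p => ?_
    simp only [star_mul', star_star, star_sub]
    rw [show star ((c p.1 p.2 : ℂ)) = (c p.1 p.2 : ℂ) by
      rw [← starRingEnd_apply, Complex.conj_ofReal], starRingEnd_apply, starRingEnd_apply]
    simp only [star_sub, star_star]
    ring

/-- A finitely supported function has finite energy. -/
lemma energy_lt_top_of_finite_support [DecidableEq V] (c : V → V → ℝ)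
    (hsymm : ∀ x y, c x y = c y x) (hfin : ∀ x, {y | c x y ≠ 0}.Finite) (φ : V → ℂ)
    (hφ : (Function.support φ).Finite) : energy c φ < ⊤ := by
  classical
  unfold energy
  set T : Finset (V × V) := hφ.toFinset.biUnion (fun a =>
    ((hfin a).toFinset.image (fun y => (a, y))) ∪
      ((hfin a).toFinset.image (fun y => (y, a)))) with hT
  have h0 : ∀ p : V × V, p ∉ T →
      ENNReal.ofReal (c p.1 p.2 * ‖φ p.1 - φ p.2‖ ^ 2) = 0 := by
    intro p hp
    by_cases hc : c p.1 p.2 = 0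
    · simp [hc]
    by_cases h1 : φ p.1 = φ p.2
    · simp [h1]
    exfalso
    apply hp
    by_cases hs : φ p.1 ≠ 0
    · refine Finset.mem_biUnion.mpr ⟨p.1, by simpa [Function.support] using hs, ?_⟩
      exact Finset.mem_union_left _ (Finset.mem_image.mpr ⟨p.2, by simpa using hc, rfl⟩)
    · push_neg at hs
      have hs2 : φ p.2 ≠ 0 := fun h => h1 (by rw [hs, h])
      refine Finset.mem_biUnion.mpr ⟨p.2, by simpa [Function.support] using hs2, ?_⟩
      refine Finset.mem_union_right _ (Finset.mem_image.mpr ⟨p.1, ?_, rfl⟩)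
      simp only [Set.Finite.mem_toFinset, Set.mem_setOf_eq]
      rw [hsymm]; exact hc
  refine ENNReal.div_lt_top ?_ (by norm_num)
  rw [tsum_eq_sum h0]
  exact (ENNReal.sum_lt_top.mpr fun _ _ => ENNReal.ofReal_lt_top).ne

/-- `⟨δ_x, f⟩_{H_E} = Σ_{y∼x} c_{xy} (f x - f y)`. -/
lemma energyInner_delta [DecidableEq V] (c : V → V → ℝ)
    (hsymm : ∀ x y, c x y = c y x) (hdiag : ∀ x, c x x = 0)
    (hfin : ∀ x, {y | c x y ≠ 0}.Finite) (x : V) (f : V → ℂ) :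
    energyInner c (fun z => if z = x then (1 : ℂ) else 0) f
      = ∑ y ∈ (hfin x).toFinset, (c x y : ℂ) * (f x - f y) := by
  classical
  have hx : x ∉ (hfin x).toFinset := by simp [hdiag x]
  unfold energyInner
  set A : Finset (V × V) := (hfin x).toFinset.image (fun y => (x, y)) with hA
  set B : Finset (V × V) := (hfin x).toFinset.image (fun y => (y, x)) with hB
  have hdisj : Disjoint A B := by
    rw [Finset.disjoint_left]
    rintro p hpA hpB
    rcases Finset.mem_image.mp hpA with ⟨y, hy, rfl⟩
    rcases Finset.mem_image.mp hpB with ⟨y', hy', hEq⟩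
    have : y' = x := by simpa using congrArg Prod.fst hEq
    exact hx (this ▸ hy')
  have h0 : ∀ p : V × V, p ∉ A ∪ B →
      (c p.1 p.2 : ℂ) * (starRingEnd ℂ)
        ((fun z => if z = x then (1 : ℂ) else 0) p.1
          - (fun z => if z = x then (1 : ℂ) else 0) p.2) * (f p.1 - f p.2) = 0 := by
    intro p hp
    simp only []
    by_cases h1 : p.1 = x <;> by_cases h2 : p.2 = x
    · simp [h1, h2]
    · have hc : c p.1 p.2 = 0 := by
        by_contra hc
        refine hp (Finset.mem_union_left _ (Finset.mem_image.mpr ⟨p.2, ?_, ?_⟩))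
        · simp only [Set.Finite.mem_toFinset, Set.mem_setOf_eq]
          rw [← h1]; exact hc
        · rw [← h1]
      simp [hc]
    · have hc : c p.1 p.2 = 0 := by
        by_contra hc
        refine hp (Finset.mem_union_right _ (Finset.mem_image.mpr ⟨p.1, ?_, ?_⟩))
        · simp only [Set.Finite.mem_toFinset, Set.mem_setOf_eq]
          rw [← h2, hsymm]; exact hc
        · rw [← h2]
      simp [hc]
    · simp [h1, h2]
  rw [tsum_eq_sum h0, Finset.sum_union hdisj]
  have hinjA : Set.InjOn (fun y => ((x, y) : V × V)) (hfin x).toFinset := by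
    intro a _ b _ h; exact congrArg Prod.snd h
  have hinjB : Set.InjOn (fun y => ((y, x) : V × V)) (hfin x).toFinset := by
    intro a _ b _ h; exact congrArg Prod.fst h
  rw [hA, hB, Finset.sum_image hinjA, Finset.sum_image hinjB]
  have hAterm : ∀ y ∈ (hfin x).toFinset,
      (c x y : ℂ) * (starRingEnd ℂ)
        ((fun z => if z = x then (1 : ℂ) else 0) x
          - (fun z => if z = x then (1 : ℂ) else 0) y) * (f x - f y)
        = (c x y : ℂ) * (f x - f y) := by
    intro y hy
    have hyx : y ≠ x := fun h => hx (h ▸ hy)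
    simp [hyx]
  have hBterm : ∀ y ∈ (hfin x).toFinset,
      (c y x : ℂ) * (starRingEnd ℂ)
        ((fun z => if z = x then (1 : ℂ) else 0) y
          - (fun z => if z = x then (1 : ℂ) else 0) x) * (f y - f x)
        = (c x y : ℂ) * (f x - f y) := by
    intro y hy
    have hyx : y ≠ x := fun h => hx (h ▸ hy)
    rw [hsymm y x]
    simp [hyx]
    ring
  rw [Finset.sum_congr rfl hAterm, Finset.sum_congr rfl hBterm]
  ring

/-- in the energy Hilbert space of a connected network `(V, E, c)` with base
point `o` and dipoles `v_x` (so `f(x) - f(o) = ⟨v_x, f⟩_{H_E}` for finite-energy `f`), the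
Dirac function `δ_x` satisfies `δ_x = c(x) v_x - Σ_{y∼x} c_{xy} v_y` in `H_E` (equality up
to an additive constant), where `c(x) = Σ_{y∼x} c_{xy}`; moreover for every finitely
supported `φ`, `|⟨φ, v_x⟩_{H_E}| = |φ(x) - φ(o)| ≤ √2 ‖φ‖_{ℓ²}`. -/
theorem stmt19 [DecidableEq V] [Countable V] [Infinite V] (c : V → V → ℝ)
    (hsymm : ∀ x y, c x y = c y x) (hnonneg : ∀ x y, 0 ≤ c x y) (hdiag : ∀ x, c x x = 0)
    (hfin : ∀ x, {y | c x y ≠ 0}.Finite)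
    (hconn : ∀ x y, ∃ (n : ℕ) (γ : Fin (n + 1) → V), γ 0 = x ∧ γ (Fin.last n) = y ∧
      ∀ i : Fin n, c (γ i.castSucc) (γ i.succ) ≠ 0)
    (o : V) (v : V → V → ℂ)
    (hdipE : ∀ x, energy c (v x) < ⊤)
    (hdip : ∀ x, ∀ f : V → ℂ, energy c f < ⊤ → f x - f o = energyInner c (v x) f) :
    ∀ x : V,
      (∃ k : ℂ, ∀ z : V,
        (if z = x then (1 : ℂ) else 0)
          = (∑ y ∈ (hfin x).toFinset, (c x y : ℂ)) * v x z
            - (∑ y ∈ (hfin x).toFinset, (c x y : ℂ) * v y z) + k) ∧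
      ∀ φ : V → ℂ, (Function.support φ).Finite →
        ‖energyInner c φ (v x)‖ = ‖φ x - φ o‖ ∧
        ‖φ x - φ o‖ ≤ Real.sqrt 2 * Real.sqrt (∑' z, ‖φ z‖ ^ 2) := by
  intro x
  constructor
  · -- δ_x = c(x) v_x - Σ c_{xy} v_y + const
    set δ : V → ℂ := fun z => if z = x then (1 : ℂ) else 0 with hδ
    have hδsupp : (Function.support δ).Finite := by
      refine (Set.finite_singleton x).subset ?_
      intro z hz
      simp only [Function.mem_support, hδ] at hz
      by_contra h
      simp only [Set.mem_singleton_iff] at h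
      exact hz (if_neg h)
    have hδE : energy c δ < ⊤ := energy_lt_top_of_finite_support c hsymm hfin δ hδsupp
    refine ⟨δ o - ((∑ y ∈ (hfin x).toFinset, (c x y : ℂ)) * v x o
      - ∑ y ∈ (hfin x).toFinset, (c x y : ℂ) * v y o), ?_⟩
    intro z
    have hvy : ∀ y, v y z - v y o = (starRingEnd ℂ) (v z y - v z o) := by
      intro y
      rw [hdip z (v y) (hdipE y), energyInner_conj, ← hdip y (v z) (hdipE z)]
    have hL : δ z - δ o = ∑ y ∈ (hfin x).toFinset,
        (c x y : ℂ) * (starRingEnd ℂ) (v z x - v z y) := by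
      rw [hdip z δ hδE, energyInner_conj, hδ,
        energyInner_delta c hsymm hdiag hfin x (v z), map_sum]
      refine Finset.sum_congr rfl fun y _ => ?_
      rw [map_mul, Complex.conj_ofReal]
    have key : δ z - δ o = (∑ y ∈ (hfin x).toFinset, (c x y : ℂ)) * (v x z - v x o)
        - ∑ y ∈ (hfin x).toFinset, (c x y : ℂ) * (v y z - v y o) := by
      rw [hL, hvy x, Finset.sum_mul, ← Finset.sum_sub_distrib]
      refine Finset.sum_congr rfl fun y _ => ?_
      rw [hvy y]
      simp only [map_sub]
      ring
    have hsum : ∑ y ∈ (hfin x).toFinset, (c x y : ℂ) * (v y z - v y o)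
        = (∑ y ∈ (hfin x).toFinset, (c x y : ℂ) * v y z)
          - ∑ y ∈ (hfin x).toFinset, (c x y : ℂ) * v y o := by
      rw [← Finset.sum_sub_distrib]
      exact Finset.sum_congr rfl fun y _ => by ring
    rw [hsum] at key
    show δ z = _
    linear_combination key
  · intro φ hφ
    have hφE : energy c φ < ⊤ := energy_lt_top_of_finite_support c hsymm hfin φ hφ
    have h1 : ‖energyInner c φ (v x)‖ = ‖φ x - φ o‖ := by
      rw [energyInner_conj, ← hdip x φ hφE, RCLike.norm_conj]
    refine ⟨h1, ?_⟩
    have hsummable : Summable (fun z => ‖φ z‖ ^ 2) := by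
      refine summable_of_ne_finset_zero (s := hφ.toFinset) fun z hz => ?_
      have : φ z = 0 := by
        by_contra h
        exact hz (hφ.mem_toFinset.mpr h)
      simp [this]
    by_cases hxo : x = o
    · rw [hxo, sub_self, norm_zero]
      positivity
    · have hle : ‖φ x‖ ^ 2 + ‖φ o‖ ^ 2 ≤ ∑' z, ‖φ z‖ ^ 2 := by
        have h := Summable.sum_le_tsum ({x, o} : Finset V) (fun i _ => by positivity) hsummable
        rwa [Finset.sum_insert (by simp [hxo]), Finset.sum_singleton] at h
      calc ‖φ x - φ o‖ ≤ ‖φ x‖ + ‖φ o‖ := norm_sub_le _ _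
        _ = Real.sqrt ((‖φ x‖ + ‖φ o‖) ^ 2) := (Real.sqrt_sq (by positivity)).symm
        _ ≤ Real.sqrt (2 * (‖φ x‖ ^ 2 + ‖φ o‖ ^ 2)) :=
            Real.sqrt_le_sqrt (by nlinarith [sq_nonneg (‖φ x‖ - ‖φ o‖)])
        _ = Real.sqrt 2 * Real.sqrt (‖φ x‖ ^ 2 + ‖φ o‖ ^ 2) := Real.sqrt_mul (by norm_num) _
        _ ≤ Real.sqrt 2 * Real.sqrt (∑' z, ‖φ z‖ ^ 2) := by
            gcongr

end Network
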